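/- arXiv:2405.04116 — 4 statements merged into one kernel-verified Lean document; each statement's English description precedes it below -/
import Mathlib

section
/- Discrete integration by parts: for any values p_i, q_i at the seeds of a Voronoi tessellation, Σ_i |ω_i| (q_i ⟨∇p⟩_i + p_i ⟨∇q⟩*_i) = Σ_i p_i q_i S_i, where ⟨∇p⟩_i = -(1/|ω_i|) Σ_j (|Γ_ij|/r_ij)(p_i - p_j)(m_ij - x_i) is the strong gradient, ⟨∇q⟩*_i = (1/|ω_i|) Σ_j (|Γ_ij|/r_ij)(q_i - q_j)(m_ij - x_j) is the weak gradient, and S_i = ∫_{∂ω_i} n dS. -/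
/-- Discrete integration by parts on a Voronoi tessellation (interior configuration):
`Σᵢ |ωᵢ| (qᵢ ⟨∇p⟩ᵢ + pᵢ ⟨∇q⟩*ᵢ) = Σᵢ pᵢ qᵢ Sᵢ`, where `⟨∇p⟩ᵢ` is the strong gradient,
`⟨∇q⟩*ᵢ` is the weak gradient, and `Sᵢ = ∫_{∂ωᵢ} n dS = -Σⱼ |Γ_ij| n_ij
= Σⱼ (|Γ_ij|/r_ij)(xᵢ - xⱼ)`. -/
theorem discrete_integration_by_parts {d N : ℕ}
    (xs : Fin N → EuclideanSpace ℝ (Fin d)) (hxs : Function.Injective xs)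
    (vol : Fin N → ℝ) (hvol : ∀ i, 0 < vol i)
    (Γ : Fin N → Fin N → ℝ) (hΓnn : ∀ i j, 0 ≤ Γ i j)
    (hΓsymm : ∀ i j, Γ i j = Γ j i)
    (m : Fin N → Fin N → EuclideanSpace ℝ (Fin d))
    (hmsymm : ∀ i j, m i j = m j i)
    (p q : Fin N → ℝ) :
    ∑ i, vol i • (q i •
        (-((vol i)⁻¹ • ∑ j ∈ Finset.univ.erase i,
          ((Γ i j / dist (xs i) (xs j)) * (p i - p j)) • (m i j - xs i)))
      + p i •
        ((vol i)⁻¹ • ∑ j ∈ Finset.univ.erase i,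
          ((Γ i j / dist (xs i) (xs j)) * (q i - q j)) • (m i j - xs j)))
    = ∑ i, (p i * q i) •
        (∑ j ∈ Finset.univ.erase i, (Γ i j / dist (xs i) (xs j)) • (xs i - xs j)) := by
  classical
  set c : Fin N → Fin N → ℝ := fun i j => Γ i j / dist (xs i) (xs j) with hc
  have hcsymm : ∀ i j, c i j = c j i := by
    intro i j; simp only [hc]; rw [hΓsymm i j, dist_comm]
  -- the difference term
  set D : Fin N → Fin N → EuclideanSpace ℝ (Fin d) := fun i j =>
    (-(q i * (c i j * (p i - p j)))) • (m i j - xs i)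
    + (p i * (c i j * (q i - q j))) • (m i j - xs j)
    - (p i * q i) • (c i j • (xs i - xs j)) with hD
  have hanti : ∀ i j, D i j = - D j i := by
    intro i j
    simp only [hD]
    rw [hcsymm j i, hmsymm j i]
    module
  have key : ∑ i, ∑ j, D i j = 0 := by
    set S := ∑ i, ∑ j, D i j with hS
    have h : S = -S := by
      calc S = ∑ j, ∑ i, D i j := Finset.sum_comm
        _ = ∑ j, ∑ i, -(D j i) :=
            Finset.sum_congr rfl fun j _ => Finset.sum_congr rfl fun i _ => hanti i j
        _ = -S := by simp [hS]
    have h2 : (2 : ℝ) • S = 0 := by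
      rw [two_smul]
      nth_rewrite 1 [h]
      simp
    rcases smul_eq_zero.mp h2 with h3 | h3
    · norm_num at h3
    · exact h3
  -- cancel vol and rewrite LHS as a double sum
  have hv : ∀ i : Fin N, vol i * (vol i)⁻¹ = 1 := fun i => mul_inv_cancel₀ (hvol i).ne'
  have hL : ∀ i : Fin N, vol i • (q i •
        (-((vol i)⁻¹ • ∑ j ∈ Finset.univ.erase i, ((c i j) * (p i - p j)) • (m i j - xs i)))
      + p i • ((vol i)⁻¹ • ∑ j ∈ Finset.univ.erase i, ((c i j) * (q i - q j)) • (m i j - xs j)))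
      = ∑ j, ((-(q i * (c i j * (p i - p j)))) • (m i j - xs i)
          + (p i * (c i j * (q i - q j))) • (m i j - xs j)) := by
    intro i
    have cancel : ∀ (r : ℝ) (v : EuclideanSpace ℝ (Fin d)),
        vol i • (r • ((vol i)⁻¹ • v)) = r • v := by
      intro r v
      rw [smul_comm (vol i) r, smul_smul (vol i), hv i, one_smul]
    rw [smul_add, ← smul_neg ((vol i)⁻¹), cancel, cancel, smul_neg]
    rw [Finset.sum_erase (a := i) _ (by simp), Finset.sum_erase (a := i) _ (by simp)]
    rw [Finset.smul_sum, Finset.smul_sum, ← Finset.sum_neg_distrib, ← Finset.sum_add_distrib]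
    refine Finset.sum_congr rfl fun j _ => ?_
    rw [smul_smul, smul_smul, neg_smul]
  have hR : ∀ i : Fin N, (p i * q i) •
        (∑ j ∈ Finset.univ.erase i, (c i j) • (xs i - xs j))
      = ∑ j, (p i * q i) • ((c i j) • (xs i - xs j)) := by
    intro i
    rw [Finset.sum_erase (a := i) _ (by simp), Finset.smul_sum]
  calc ∑ i, vol i • (q i •
        (-((vol i)⁻¹ • ∑ j ∈ Finset.univ.erase i, ((c i j) * (p i - p j)) • (m i j - xs i)))
      + p i • ((vol i)⁻¹ • ∑ j ∈ Finset.univ.erase i, ((c i j) * (q i - q j)) • (m i j - xs j)))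
      = ∑ i, ∑ j, ((-(q i * (c i j * (p i - p j)))) • (m i j - xs i)
          + (p i * (c i j * (q i - q j))) • (m i j - xs j)) := Finset.sum_congr rfl fun i _ => hL i
    _ = ∑ i, ∑ j, (p i * q i) • ((c i j) • (xs i - xs j)) := by
        rw [← sub_eq_zero, ← Finset.sum_sub_distrib]
        simp_rw [← Finset.sum_sub_distrib]
        exact key
    _ = ∑ i, (p i * q i) • (∑ j ∈ Finset.univ.erase i, (c i j) • (xs i - xs j)) :=
        (Finset.sum_congr rfl fun i _ => (hR i).symm)
end

section
/- Volume conservation of the semi-discrete scheme: if the velocities v_i satisfy the discrete divergence-free constraint Σ_i |ω_i| v_i · ⟨∇φ⟩_i = 0 for all test values φ_i, then d|ω_i|/dt = 0 for every cell i, where d|ω_i|/dt = |ω_i| ⟨∇·v⟩*_i - S_i · v_i. -/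
/-!
Swapping `i ↔ j` in the double sums and using the symmetry of the face data `Γ` and `m` gives
the discrete integration by parts
`Σᵢ |ωᵢ| (φᵢ ⟨∇·v⟩*ᵢ + vᵢ · ⟨∇φ⟩ᵢ) = Σᵢ φᵢ Sᵢ · vᵢ`. The constraint kills the gradient part, so
`Σᵢ φᵢ (|ωᵢ| ⟨∇·v⟩*ᵢ - Sᵢ · vᵢ) = 0` for every `φ`, and each summand vanishes.
-/

open Finset RealInnerProductSpace

namespace SemidiscreteScheme

variable {ι E : Type*} [Fintype ι] [DecidableEq ι] [NormedAddCommGroup E] [InnerProductSpace ℝ E]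

/-- `c i j` stands for `|Γᵢⱼ| / rᵢⱼ`, `m i j` for the face centroid `mᵢⱼ`. -/
noncomputable def strongGrad (vol : ι → ℝ) (c : ι → ι → ℝ) (m : ι → ι → E) (x : ι → E)
    (φ : ι → ℝ) (i : ι) : E :=
  -((vol i)⁻¹ • ∑ j ∈ univ.erase i, (c i j * (φ i - φ j)) • (m i j - x i))

noncomputable def weakDiv (vol : ι → ℝ) (c : ι → ι → ℝ) (m : ι → ι → E) (x : ι → E)
    (v : ι → E) (i : ι) : ℝ :=
  (vol i)⁻¹ * ∑ j ∈ univ.erase i, c i j * ⟪v i - v j, m i j - x j⟫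

def surfaceVector (c : ι → ι → ℝ) (x : ι → E) (i : ι) : E :=
  ∑ j ∈ univ.erase i, c i j • (x i - x j)

section

variable {vol : ι → ℝ} {c : ι → ι → ℝ} {m : ι → ι → E} {x : ι → E}

theorem vol_mul_weakDiv {i : ι} (hi : vol i ≠ 0) (v : ι → E) :
    vol i * weakDiv vol c m x v i = ∑ j, c i j * ⟪v i - v j, m i j - x j⟫ := by
  rw [weakDiv, mul_inv_cancel_left₀ hi, sum_erase _ (by simp)]

theorem vol_mul_inner_strongGrad {i : ι} (hi : vol i ≠ 0) (v : ι → E) (φ : ι → ℝ) :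
    vol i * ⟪v i, strongGrad vol c m x φ i⟫ =
      -∑ j, c i j * (φ i - φ j) * ⟪v i, m i j - x i⟫ := by
  simp only [strongGrad, inner_neg_right, inner_smul_right, inner_sum,
    mul_neg, mul_inv_cancel_left₀ hi]
  rw [sum_erase _ (by simp)]

theorem inner_surfaceVector (v : ι → E) (i : ι) :
    ⟪surfaceVector c x i, v i⟫ = ∑ j, c i j * ⟪x i - x j, v i⟫ := by
  simp only [surfaceVector, sum_inner, inner_smul_left, RCLike.conj_to_real]
  rw [sum_erase _ (by simp)]

theorem sum_vol_mul_weakDiv_add_inner_strongGrad (hvol : ∀ i, vol i ≠ 0)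
    (hc : ∀ i j, c i j = c j i) (hm : ∀ i j, m i j = m j i) (φ : ι → ℝ) (v : ι → E) :
    ∑ i, vol i * (φ i * weakDiv vol c m x v i + ⟪v i, strongGrad vol c m x φ i⟫) =
      ∑ i, φ i * ⟪surfaceVector c x i, v i⟫ := by
  have hswap : ∑ i, ∑ j, φ i * c i j * ⟪v j, m i j - x j⟫ =
      ∑ i, ∑ j, φ j * c i j * ⟪v i, m i j - x i⟫ := by
    rw [sum_comm]
    exact sum_congr rfl fun i _ => sum_congr rfl fun j _ => by rw [hc, hm]
  calc ∑ i, vol i * (φ i * weakDiv vol c m x v i + ⟪v i, strongGrad vol c m x φ i⟫)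
      = ∑ i, ∑ j, (φ i * c i j * ⟪x i - x j, v i⟫ +
          (φ j * c i j * ⟪v i, m i j - x i⟫ - φ i * c i j * ⟪v j, m i j - x j⟫)) := by
        refine sum_congr rfl fun i _ => ?_
        rw [mul_add, mul_left_comm, vol_mul_weakDiv (hvol i), vol_mul_inner_strongGrad (hvol i),
          mul_sum, ← sub_eq_add_neg, ← sum_sub_distrib]
        refine sum_congr rfl fun j _ => ?_
        have hface : m i j - x j = (m i j - x i) + (x i - x j) := by abel
        rw [hface, inner_sub_left, inner_add_right, inner_add_right, real_inner_comm (v i)]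
        ring
    _ = ∑ i, φ i * ⟪surfaceVector c x i, v i⟫ := by
        simp only [sum_add_distrib, sum_sub_distrib]
        rw [hswap, sub_self, add_zero]
        simp only [inner_surfaceVector, mul_sum, mul_assoc]

theorem vol_mul_weakDiv_sub_inner_surfaceVector_eq_zero (hvol : ∀ i, vol i ≠ 0)
    (hc : ∀ i j, c i j = c j i) (hm : ∀ i j, m i j = m j i) {v : ι → E}
    (hv : ∀ φ : ι → ℝ, ∑ i, vol i * ⟪v i, strongGrad vol c m x φ i⟫ = 0) (i : ι) :
    vol i * weakDiv vol c m x v i - ⟪surfaceVector c x i, v i⟫ = 0 := by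
  refine congrFun (dotProduct_eq_zero
    (fun i => vol i * weakDiv vol c m x v i - ⟪surfaceVector c x i, v i⟫) fun φ => ?_) i
  have hibp := sum_vol_mul_weakDiv_add_inner_strongGrad (x := x) hvol hc hm φ v
  simp only [mul_add, sum_add_distrib, hv, add_zero] at hibp
  calc ∑ i, (vol i * weakDiv vol c m x v i - ⟪surfaceVector c x i, v i⟫) * φ i
      = ∑ i, vol i * (φ i * weakDiv vol c m x v i) - ∑ i, φ i * ⟪surfaceVector c x i, v i⟫ := by
        rw [← sum_sub_distrib]
        exact sum_congr rfl fun i _ => by ring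
    _ = 0 := by rw [hibp, sub_self]

end

end SemidiscreteScheme

open SemidiscreteScheme in
theorem semidiscrete_volume_conservation_general {d N : ℕ}
    (xs : Fin N → EuclideanSpace ℝ (Fin d))
    (vol : Fin N → ℝ) (hvol : ∀ i, 0 < vol i)
    (Γ : Fin N → Fin N → ℝ)
    (hΓsymm : ∀ i j, Γ i j = Γ j i)
    (m : Fin N → Fin N → EuclideanSpace ℝ (Fin d))
    (hmsymm : ∀ i j, m i j = m j i)
    (v : Fin N → EuclideanSpace ℝ (Fin d))
    (hconstraint : ∀ φ : Fin N → ℝ,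
      ∑ i, vol i * (inner ℝ (v i)
        (-((vol i)⁻¹ • ∑ j ∈ Finset.univ.erase i,
          ((Γ i j / dist (xs i) (xs j)) * (φ i - φ j)) • (m i j - xs i))) : ℝ) = 0) :
    ∀ i, vol i * ((vol i)⁻¹ * ∑ j ∈ Finset.univ.erase i,
        (Γ i j / dist (xs i) (xs j)) * (inner ℝ (v i - v j) (m i j - xs j) : ℝ))
      - (inner ℝ (∑ j ∈ Finset.univ.erase i,
          (Γ i j / dist (xs i) (xs j)) • (xs i - xs j)) (v i) : ℝ) = 0 :=
  vol_mul_weakDiv_sub_inner_surfaceVector_eq_zero (c := fun i j => Γ i j / dist (xs i) (xs j))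
    (fun i => (hvol i).ne') (fun i j => by rw [hΓsymm, dist_comm]) hmsymm hconstraint

/-- Volume conservation of the semi-discrete scheme: if the velocities `vᵢ` satisfy the
discrete divergence-free constraint `Σᵢ |ωᵢ| vᵢ · ⟨∇φ⟩ᵢ = 0` for all test values `φ`, then
`d|ωᵢ|/dt = |ωᵢ| ⟨∇·v⟩*ᵢ - Sᵢ · vᵢ = 0` for every cell `i`, where
`Sᵢ = Σⱼ (|Γ_ij|/r_ij)(xᵢ - xⱼ)`, `⟨∇φ⟩ᵢ` is the strong gradient and `⟨∇·v⟩*ᵢ` is the weak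
divergence. -/
theorem semidiscrete_volume_conservation {d N : ℕ}
    (xs : Fin N → EuclideanSpace ℝ (Fin d)) (hxs : Function.Injective xs)
    (vol : Fin N → ℝ) (hvol : ∀ i, 0 < vol i)
    (Γ : Fin N → Fin N → ℝ) (hΓnn : ∀ i j, 0 ≤ Γ i j)
    (hΓsymm : ∀ i j, Γ i j = Γ j i)
    (m : Fin N → Fin N → EuclideanSpace ℝ (Fin d))
    (hmsymm : ∀ i j, m i j = m j i)
    (v : Fin N → EuclideanSpace ℝ (Fin d))
    (hconstraint : ∀ φ : Fin N → ℝ,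
      ∑ i, vol i * (inner ℝ (v i)
        (-((vol i)⁻¹ • ∑ j ∈ Finset.univ.erase i,
          ((Γ i j / dist (xs i) (xs j)) * (φ i - φ j)) • (m i j - xs i))) : ℝ) = 0) :
    ∀ i, vol i * ((vol i)⁻¹ * ∑ j ∈ Finset.univ.erase i,
        (Γ i j / dist (xs i) (xs j)) * (inner ℝ (v i - v j) (m i j - xs j) : ℝ))
      - (inner ℝ (∑ j ∈ Finset.univ.erase i,
          (Γ i j / dist (xs i) (xs j)) • (xs i - xs j)) (v i) : ℝ) = 0 :=
  semidiscrete_volume_conservation_general xs vol hvol Γ hΓsymm m hmsymm v hconstraint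
end

section
/- Energy conservation of the semi-discrete scheme: if dv_i/dt = -(1/ρ_i)⟨∇p⟩_i, the constraint Σ_i |ω_i| v_i · ⟨∇φ⟩_i = 0 holds for all φ, and the volumes |ω_i| and densities ρ_i are constant in time, then E = (1/2) Σ_i |ω_i| ρ_i |v_i|² satisfies dE/dt = 0. -/
/-! Since `d/dt ‖vᵢ‖² = 2 ⟪vᵢ, dvᵢ/dt⟫`, the momentum equation makes `dE/dt` equal to
`-Σᵢ |ωᵢ| ⟪vᵢ, ⟨∇p⟩ᵢ⟫`: the densities cancel. This is the divergence constraint tested with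
`φ = p`, hence zero. -/

open Finset

section KineticEnergy

variable {ι E : Type*} [Fintype ι] [NormedAddCommGroup E] [InnerProductSpace ℝ E]

theorem hasDerivAt_half_sum_mul_norm_sq (m : ι → ℝ) {v : ℝ → ι → E} {v' : ι → E} {t : ℝ}
    (hv : ∀ i, HasDerivAt (fun s => v s i) (v' i) t) :
    HasDerivAt (fun s => (1 / 2) * ∑ i, m i * ‖v s i‖ ^ 2)
      (∑ i, m i * inner ℝ (v t i) (v' i)) t := by
  have hsum := HasDerivAt.fun_sum (u := univ) fun i _ => ((hv i).norm_sq).const_mul (m i)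
  have hhalf : ∑ i, m i * inner ℝ (v t i) (v' i)
      = 1 / 2 * ∑ i, m i * (2 * inner ℝ (v t i) (v' i)) := by
    rw [mul_sum]
    exact sum_congr rfl fun i _ => by ring
  rw [hhalf]
  exact hsum.const_mul (1 / 2)

theorem sum_mul_mul_inner_neg_inv_smul {vol ρ : ι → ℝ} (hρ : ∀ i, ρ i ≠ 0) (v g : ι → E) :
    ∑ i, vol i * ρ i * inner ℝ (v i) (-((ρ i)⁻¹ • g i)) = -∑ i, vol i * inner ℝ (v i) (g i) := by
  rw [← sum_neg_distrib]
  refine sum_congr rfl fun i _ => ?_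
  rw [inner_neg_right, real_inner_smul_right]
  field_simp [hρ i]

end KineticEnergy

theorem semidiscrete_energy_conservation_general {d N : ℕ}
    (vol ρ : Fin N → ℝ) (hρ : ∀ i, 0 < ρ i)
    (sg : ℝ → (Fin N → ℝ) → Fin N → EuclideanSpace ℝ (Fin d))
    (v : ℝ → Fin N → EuclideanSpace ℝ (Fin d))
    (p : ℝ → Fin N → ℝ)
    (hmom : ∀ t i, HasDerivAt (fun s => v s i) (-((ρ i)⁻¹ • sg t (p t) i)) t)
    (hconstraint : ∀ t, ∀ φ : Fin N → ℝ,
      ∑ i, vol i * (inner ℝ (v t i) (sg t φ i) : ℝ) = 0) :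
    ∀ t, HasDerivAt (fun s => (1 / 2) * ∑ i, vol i * ρ i * ‖v s i‖ ^ 2) 0 t := by
  intro t
  have hE := hasDerivAt_half_sum_mul_norm_sq (fun i => vol i * ρ i) (hmom t)
  rwa [sum_mul_mul_inner_neg_inv_smul (fun i => (hρ i).ne'), hconstraint t (p t), neg_zero]
    at hE

/-- Energy conservation of the semi-discrete scheme: if `dvᵢ/dt = -(1/ρᵢ) ⟨∇p⟩ᵢ`, the
discrete divergence constraint `Σᵢ |ωᵢ| vᵢ · ⟨∇φ⟩ᵢ = 0` holds for all test values `φ`, and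
the volumes `|ωᵢ|` and densities `ρᵢ` are constant in time, then the total energy
`E = (1/2) Σᵢ |ωᵢ| ρᵢ |vᵢ|²` is conserved: `dE/dt = 0`. Here `sg t φ` denotes the discrete
strong gradient operator on the (moving) Voronoi mesh at time `t`. -/
theorem semidiscrete_energy_conservation {d N : ℕ}
    (vol ρ : Fin N → ℝ) (hvol : ∀ i, 0 < vol i) (hρ : ∀ i, 0 < ρ i)
    (sg : ℝ → (Fin N → ℝ) → Fin N → EuclideanSpace ℝ (Fin d))
    (v : ℝ → Fin N → EuclideanSpace ℝ (Fin d))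
    (p : ℝ → Fin N → ℝ)
    (hmom : ∀ t i, HasDerivAt (fun s => v s i) (-((ρ i)⁻¹ • sg t (p t) i)) t)
    (hconstraint : ∀ t, ∀ φ : Fin N → ℝ,
      ∑ i, vol i * (inner ℝ (v t i) (sg t φ i) : ℝ) = 0) :
    ∀ t, HasDerivAt (fun s => (1 / 2) * ∑ i, vol i * ρ i * ‖v s i‖ ^ 2) 0 t :=
  semidiscrete_energy_conservation_general vol ρ hρ sg v p hmom hconstraint
end

section
/- The right-hand side vector b with b_i = (|ω_i|/Δt) ⟨∇·v⟩*_i satisfies Σ_i b_i = 0 (orthogonal to the kernel of B), whenever the domain boundary terms vanish, because Σ_i |ω_i| v_i · ⟨∇1⟩_i = 0. -/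
/-
Write `c i j = Γ i j / r i j`, which is symmetric. Expanding `vᵢ - vⱼ` and exchanging the roles
of `i` and `j` in the `vⱼ` half (using `c` and `m` symmetric) turns `Σᵢ |ωᵢ| ⟨∇·v⟩*ᵢ` into
`Σᵢ Σⱼ c i j ⟨vᵢ, (m i j - xⱼ) - (m i j - xᵢ)⟩ = Σᵢ vᵢ · Sᵢ`: the unknown face points `m i j` cancel,
and what remains is the sum of the boundary terms, which vanish.
-/

open Finset

theorem Finset.sum_sum_erase_swap {ι M : Type*} [Fintype ι] [DecidableEq ι] [AddCommMonoid M]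
    (f : ι → ι → M) :
    ∑ i, ∑ j ∈ univ.erase i, f i j = ∑ i, ∑ j ∈ univ.erase i, f j i :=
  sum_comm' (by simp [mem_erase, and_comm, eq_comm])

theorem sum_sum_erase_mul_inner_sub_eq_sum_inner_sum_smul
    {ι E : Type*} [Fintype ι] [DecidableEq ι] [NormedAddCommGroup E] [InnerProductSpace ℝ E]
    (c : ι → ι → ℝ) (hc : ∀ i j, c i j = c j i) (m : ι → ι → E) (hm : ∀ i j, m i j = m j i)
    (x v : ι → E) :
    ∑ i, ∑ j ∈ univ.erase i, c i j * inner ℝ (v i - v j) (m i j - x j)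
      = ∑ i, inner ℝ (v i) (∑ j ∈ univ.erase i, c i j • (x i - x j)) := by
  have swap_half : ∑ i, ∑ j ∈ univ.erase i, c i j * inner ℝ (v j) (m i j - x j)
      = ∑ i, ∑ j ∈ univ.erase i, c i j * inner ℝ (v i) (m i j - x i) := by
    rw [sum_sum_erase_swap]
    simp only [hc, hm]
  calc ∑ i, ∑ j ∈ univ.erase i, c i j * inner ℝ (v i - v j) (m i j - x j)
      = ∑ i, ∑ j ∈ univ.erase i, c i j * inner ℝ (v i) (m i j - x j)
          - ∑ i, ∑ j ∈ univ.erase i, c i j * inner ℝ (v j) (m i j - x j) := by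
        simp only [inner_sub_left, mul_sub, sum_sub_distrib]
    _ = ∑ i, ∑ j ∈ univ.erase i, c i j * inner ℝ (v i) ((m i j - x j) - (m i j - x i)) := by
        rw [swap_half]
        simp only [inner_sub_right, mul_sub, sum_sub_distrib]
    _ = ∑ i, inner ℝ (v i) (∑ j ∈ univ.erase i, c i j • (x i - x j)) := by
        simp only [sub_sub_sub_cancel_left, inner_sum, real_inner_smul_right]

theorem rhs_vector_sums_to_zero_general {d N : ℕ}
    (xs : Fin N → EuclideanSpace ℝ (Fin d))
    (vol : Fin N → ℝ) (hvol : ∀ i, 0 < vol i)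
    (Δt : ℝ)
    (Γ : Fin N → Fin N → ℝ)
    (hΓsymm : ∀ i j, Γ i j = Γ j i)
    (m : Fin N → Fin N → EuclideanSpace ℝ (Fin d))
    (hmsymm : ∀ i j, m i j = m j i)
    (v : Fin N → EuclideanSpace ℝ (Fin d))
    (hnopen : ∀ i, (inner ℝ (v i)
      (∑ j ∈ Finset.univ.erase i, (Γ i j / dist (xs i) (xs j)) • (xs i - xs j)) : ℝ) = 0)
    (b : Fin N → ℝ)
    (hb : ∀ i, b i = (vol i / Δt) * ((vol i)⁻¹ * ∑ j ∈ Finset.univ.erase i,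
      (Γ i j / dist (xs i) (xs j)) * (inner ℝ (v i - v j) (m i j - xs j) : ℝ))) :
    ∑ i, b i = 0 := by
  have hb' : ∀ i, b i = Δt⁻¹ * ∑ j ∈ univ.erase i,
      (Γ i j / dist (xs i) (xs j)) * inner ℝ (v i - v j) (m i j - xs j) := fun i => by
    rw [hb i, ← mul_assoc, div_mul_eq_mul_div, mul_inv_cancel₀ (hvol i).ne', one_div]
  have hc : ∀ i j, Γ i j / dist (xs i) (xs j) = Γ j i / dist (xs j) (xs i) := fun i j => by
    rw [hΓsymm, dist_comm]
  simp only [hb', ← mul_sum,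
    sum_sum_erase_mul_inner_sub_eq_sum_inner_sum_smul _ hc m hmsymm xs v, hnopen,
    sum_const_zero, mul_zero]

/-- The right-hand side vector `b` with `bᵢ = (|ωᵢ|/Δt) ⟨∇·v⟩*ᵢ` satisfies `Σᵢ bᵢ = 0`
(i.e. it is orthogonal to the kernel of `B`, spanned by constants), whenever the boundary
terms `vᵢ · Sᵢ` vanish, where `Sᵢ = Σⱼ (|Γ_ij|/r_ij)(xᵢ - xⱼ)` and
`⟨∇·v⟩*ᵢ = (1/|ωᵢ|) Σⱼ (|Γ_ij|/r_ij)(vᵢ - vⱼ)·(m_ij - xⱼ)`. -/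
theorem rhs_vector_sums_to_zero {d N : ℕ}
    (xs : Fin N → EuclideanSpace ℝ (Fin d)) (hxs : Function.Injective xs)
    (vol : Fin N → ℝ) (hvol : ∀ i, 0 < vol i)
    (Δt : ℝ) (hΔt : 0 < Δt)
    (Γ : Fin N → Fin N → ℝ) (hΓnn : ∀ i j, 0 ≤ Γ i j)
    (hΓsymm : ∀ i j, Γ i j = Γ j i)
    (m : Fin N → Fin N → EuclideanSpace ℝ (Fin d))
    (hmsymm : ∀ i j, m i j = m j i)
    (v : Fin N → EuclideanSpace ℝ (Fin d))
    (hnopen : ∀ i, (inner ℝ (v i)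
      (∑ j ∈ Finset.univ.erase i, (Γ i j / dist (xs i) (xs j)) • (xs i - xs j)) : ℝ) = 0)
    (b : Fin N → ℝ)
    (hb : ∀ i, b i = (vol i / Δt) * ((vol i)⁻¹ * ∑ j ∈ Finset.univ.erase i,
      (Γ i j / dist (xs i) (xs j)) * (inner ℝ (v i - v j) (m i j - xs j) : ℝ))) :
    ∑ i, b i = 0 :=
  rhs_vector_sums_to_zero_general xs vol hvol Δt Γ hΓsymm m hmsymm v hnopen b hb
end
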